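/- arXiv:math/0311072 — 3 statements merged into one kernel-verified Lean document; each statement's English description precedes it below -/
import Mathlib

section
/- Let A be a unital C*-algebra and π : A → M_n(ℂ) a surjective *-homomorphism (e.g., an n-dimensional irreducible representation). Then every A-monotone continuous function f : [0,∞) → ℝ is matrix monotone of order n: for all positive semidefinite n×n matrices c ≤ d, f(c) ≤ f(d). -/
noncomputable section

/-- `f` is `A`-monotone: for self-adjoint `x ≤ y` with spectra in `[0,∞)`,
`f(x) ≤ f(y)` via the continuous functional calculus. -/
def AMonotone (A : Type) [CStarAlgebra A] [PartialOrder A] [StarOrderedRing A]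
    (f : ℝ → ℝ) : Prop :=
  ∀ x y : A, IsSelfAdjoint x → IsSelfAdjoint y →
    spectrum ℝ x ⊆ Set.Ici (0:ℝ) → spectrum ℝ y ⊆ Set.Ici (0:ℝ) →
    x ≤ y → cfc f x ≤ cfc f y

/-- The C*-algebra of `n × n` complex matrices, realized as operators on
`n`-dimensional complex Hilbert space. -/
abbrev MatAlg (n : ℕ) := EuclideanSpace ℂ (Fin n) →L[ℂ] EuclideanSpace ℂ (Fin n)

/-- `f` is matrix monotone of order `n`. -/
def MatrixMonotone (n : ℕ) (f : ℝ → ℝ) : Prop := AMonotone (MatAlg n) f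

/-- A (unital) representation of `A` on a Hilbert space `H` is (topologically)
irreducible if the only closed invariant subspaces are trivial. -/
def IsIrreducibleRep {A : Type} [CStarAlgebra A] {H : Type} [NormedAddCommGroup H]
    [InnerProductSpace ℂ H] [CompleteSpace H] (π : A →⋆ₐ[ℂ] (H →L[ℂ] H)) : Prop :=
  ∀ K : Submodule ℂ H, IsClosed (K : Set H) → (∀ a : A, ∀ x ∈ K, π a x ∈ K) → K = ⊥ ∨ K = ⊤


/-- A star algebra homomorphism of C*-algebras is continuous. -/
lemma starAlgHom_continuous {A B : Type} [CStarAlgebra A] [CStarAlgebra B]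
    (π : A →⋆ₐ[ℂ] B) : Continuous π :=
  AddMonoidHomClass.continuous_of_bound π 1 fun a => by
    simpa using NonUnitalStarAlgHom.norm_apply_le π a

/-- A star algebra homomorphism of C*-algebras preserves nonnegativity. -/
lemma map_nonneg_of_starAlgHom {A B : Type} [CStarAlgebra A] [PartialOrder A]
    [StarOrderedRing A] [CStarAlgebra B] [PartialOrder B] [StarOrderedRing B]
    (π : A →⋆ₐ[ℂ] B) {x : A} (hx : 0 ≤ x) : 0 ≤ π x := by
  have h : x = star (CFC.sqrt x) * CFC.sqrt x := by
    rw [(IsSelfAdjoint.of_nonneg (CFC.sqrt_nonneg (a := x))).star_eq, CFC.sqrt_mul_sqrt_self x hx]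
  calc (0 : B) ≤ star (π (CFC.sqrt x)) * π (CFC.sqrt x) := star_mul_self_nonneg _
    _ = π x := by rw [← map_star, ← map_mul, ← h]

set_option maxHeartbeats 1000000 in
/-- Nonnegative elements lift along surjective star homomorphisms of C*-algebras. -/
lemma exists_nonneg_preimage {A : Type} [CStarAlgebra A] [PartialOrder A]
    [StarOrderedRing A] {n : ℕ} (π : A →⋆ₐ[ℂ] MatAlg n) (hπ : Function.Surjective π)
    {c : MatAlg n} (hc : 0 ≤ c) : ∃ a : A, 0 ≤ a ∧ π a = c := by
  obtain ⟨z, hz⟩ := hπ c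
  set a₀ : A := (2:ℂ)⁻¹ • (z + star z) with ha₀
  have ha₀sa : IsSelfAdjoint a₀ := by
    simp only [ha₀, IsSelfAdjoint, star_smul, star_add, star_star]
    rw [add_comm]
    congr 1
    simp [RCLike.star_def]
  have hπa₀ : π a₀ = c := by
    have hcsa : star c = c := (IsSelfAdjoint.of_nonneg hc).star_eq
    simp only [ha₀, map_smul, map_add, map_star, hz, hcsa]
    rw [← two_smul ℂ c, smul_smul]
    norm_num
  refine ⟨cfc (fun t : ℝ => max t 0) a₀, cfc_nonneg fun t _ => le_max_right t 0, ?_⟩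
  have hcont : ContinuousOn (fun t : ℝ => max t 0) (spectrum ℝ a₀) :=
    (continuous_id.max continuous_const).continuousOn
  rw [StarAlgHom.map_cfc π (fun t : ℝ => max t 0) a₀ hcont (starAlgHom_continuous π) ha₀sa
    (hπa₀ ▸ IsSelfAdjoint.of_nonneg hc), hπa₀]
  have : cfc (fun t : ℝ => max t 0) c = cfc (id : ℝ → ℝ) c := by
    apply cfc_congr
    intro t ht
    have := spectrum_nonneg_of_nonneg hc ht
    simp [max_eq_left this]
  rw [this, cfc_id ℝ c (IsSelfAdjoint.of_nonneg hc)]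

set_option maxHeartbeats 1000000 in
/-- If `A` has a surjective *-homomorphism onto `M_n(ℂ)`, then every `A`-monotone
continuous function is matrix monotone of order `n`. -/
theorem stmt2 (A : Type) [CStarAlgebra A] [PartialOrder A] [StarOrderedRing A] (n : ℕ)
    (π : A →⋆ₐ[ℂ] MatAlg n) (hπ : Function.Surjective π)
    (f : ℝ → ℝ) (hf : ContinuousOn f (Set.Ici (0:ℝ))) (hA : AMonotone A f) :
    MatrixMonotone n f := by
  intro c d hcsa hdsa hcspec hdspec hcd
  have hc : (0:MatAlg n) ≤ c := by
    rw [StarOrderedRing.nonneg_iff_spectrum_nonneg (R := ℝ) c hcsa]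
    exact hcspec
  have hd : (0:MatAlg n) ≤ d := by
    rw [StarOrderedRing.nonneg_iff_spectrum_nonneg (R := ℝ) d hdsa]
    exact hdspec
  obtain ⟨a, ha, hπa⟩ := exists_nonneg_preimage π hπ hc
  obtain ⟨e, he, hπe⟩ := exists_nonneg_preimage π hπ (sub_nonneg.mpr hcd)
  set b := a + e with hb
  have hπb : π b = d := by rw [hb, map_add, hπa, hπe]; abel
  have hab : a ≤ b := le_add_of_nonneg_right he
  have hbnn : (0:A) ≤ b := add_nonneg ha he
  have haspec : spectrum ℝ a ⊆ Set.Ici (0:ℝ) := fun t ht => spectrum_nonneg_of_nonneg ha ht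
  have hbspec : spectrum ℝ b ⊆ Set.Ici (0:ℝ) := fun t ht => spectrum_nonneg_of_nonneg hbnn ht
  have hle : cfc f a ≤ cfc f b :=
    hA a b (IsSelfAdjoint.of_nonneg ha) (IsSelfAdjoint.of_nonneg hbnn) haspec hbspec hab
  have hfa : π (cfc f a) = cfc f c := by
    rw [StarAlgHom.map_cfc π f a (hf.mono haspec) (starAlgHom_continuous π)
      (IsSelfAdjoint.of_nonneg ha) (hπa ▸ hcsa), hπa]
  have hfb : π (cfc f b) = cfc f d := by
    rw [StarAlgHom.map_cfc π f b (hf.mono hbspec) (starAlgHom_continuous π)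
      (IsSelfAdjoint.of_nonneg hbnn) (hπb ▸ hdsa), hπb]
  rw [← hfa, ← hfb, ← sub_nonneg, ← map_sub]
  exact map_nonneg_of_starAlgHom π (sub_nonneg.mpr hle)
end
end

section
/- Let π : A → M_n(ℂ) be a surjective *-homomorphism between a unital C*-algebra A and the n×n matrices. Then for any positive semidefinite matrices c, d ∈ M_n(ℂ) with c ≤ d, there exist positive elements a, b ∈ A with a ≤ b, π(a) = c, and π(b) = d. -/
noncomputable section

/-- A surjective *-homomorphism of C*-algebras maps the positive cone onto the
positive cone: every positive element downstairs has a positive preimage. -/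
lemma lift_pos {A B : Type} [CStarAlgebra A] [PartialOrder A] [StarOrderedRing A]
    [CStarAlgebra B] [PartialOrder B] [StarOrderedRing B]
    (π : A →⋆ₐ[ℂ] B) (hπ : Function.Surjective π)
    (p : B) (hp : 0 ≤ p) : ∃ a : A, 0 ≤ a ∧ π a = p := by
  obtain ⟨x, hx⟩ := hπ p
  have hpsa : IsSelfAdjoint p := .of_nonneg hp
  set y : A := (2⁻¹ : ℂ) • (x + star x) with hy
  have hysa : IsSelfAdjoint y := by
    rw [IsSelfAdjoint, hy]
    simp [star_smul, star_add, add_comm, starRingEnd]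
  have hπy : π y = p := by
    rw [hy, map_smul, map_add, map_star, hx, hpsa.star_eq, ← two_smul ℂ p, smul_smul]
    norm_num
  have hcont : Continuous π :=
    AddMonoidHomClass.continuous_of_bound π 1
      (by simpa only [one_mul] using NonUnitalStarAlgHom.norm_apply_le π)
  refine ⟨y⁺, CFC.posPart_nonneg y, ?_⟩
  have key := NonUnitalStarAlgHomClass.map_cfcₙ (R := ℝ) (S := ℂ) π (·⁺ : ℝ → ℝ) y
    (by fun_prop) (by simp) hcont hysa (hπy ▸ hpsa)
  rw [CFC.posPart_def, key, hπy, ← CFC.posPart_def]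
  exact (CFC.posPart_eq_self p).mpr hp

/-- Along a surjective *-homomorphism onto `M_n(ℂ)`, ordered pairs of positive
matrices lift to ordered pairs of positive elements. -/
theorem stmt3 (A : Type) [CStarAlgebra A] [PartialOrder A] [StarOrderedRing A] (n : ℕ)
    (π : A →⋆ₐ[ℂ] MatAlg n) (hπ : Function.Surjective π)
    (c d : MatAlg n) (hc : 0 ≤ c) (hd : 0 ≤ d) (hcd : c ≤ d) :
    ∃ a b : A, 0 ≤ a ∧ 0 ≤ b ∧ a ≤ b ∧ π a = c ∧ π b = d := by
  obtain ⟨a, ha, hπa⟩ := lift_pos π hπ c hc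
  obtain ⟨e, he, hπe⟩ := lift_pos π hπ (d - c) (sub_nonneg.mpr hcd)
  refine ⟨a, a + e, ha, add_nonneg ha he, le_add_of_nonneg_right he, hπa, ?_⟩
  rw [map_add, hπa, hπe, add_sub_cancel]
end
end

section
/- Let A be a unital C*-algebra that admits, for every positive integer m, an irreducible representation of finite dimension at least m (i.e., the set of dimensions of finite-dimensional irreducible representations of A is unbounded). Then every A-monotone continuous function f : [0,∞) → ℝ is matrix monotone of every order, hence operator monotone: P_A = P_∞. -/
noncomputable section

/-! An irreducible representation `π` of `A` on `ℂᵏ` is onto `Mₖ(ℂ)`: by Schur's lemma its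
commutant consists of scalars, so Jacobson's density theorem produces every matrix. A surjective
`⋆`-homomorphism lifts `0 ≤ x ≤ y` to `0 ≤ a ≤ b` and commutes with the functional calculus, so
`A`-monotone functions are `k`-monotone. For `n ≤ k`, an isometry `J : ℂⁿ → ℂᵏ` embeds `Mₙ(ℂ)` as
the corner `S ↦ J S J⋆`, which preserves and reflects order. The corner embedding is not unital, but
`cfc f = cfcₙ (f - f 0) + f 0` reduces everything to the non-unital calculus, which it preserves. -/

open scoped CStarAlgebra

lemma aMonotone_iff {A : Type} [CStarAlgebra A] [PartialOrder A] [StarOrderedRing A]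
    {f : ℝ → ℝ} : AMonotone A f ↔ ∀ x y : A, 0 ≤ x → x ≤ y → cfc f x ≤ cfc f y := by
  refine ⟨fun h x y hx hxy ↦ ?_, fun h x y hx _ hsx _ hxy ↦ ?_⟩
  · have hy := hx.trans hxy
    exact h x y (.of_nonneg hx) (.of_nonneg hy) (spectrum_nonneg_of_nonneg hx)
      (spectrum_nonneg_of_nonneg hy) hxy
  · exact h x y ((StarOrderedRing.nonneg_iff_spectrum_nonneg x hx).mpr hsx) hxy

lemma StarAlgHom.exists_nonneg_preimage_of_surjective {A B : Type*} [CStarAlgebra A]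
    [PartialOrder A] [StarOrderedRing A] [CStarAlgebra B] [PartialOrder B] [StarOrderedRing B]
    (π : A →⋆ₐ[ℂ] B) (hπ : Function.Surjective π) {x : B} (hx : 0 ≤ x) :
    ∃ a, 0 ≤ a ∧ π a = x := by
  obtain ⟨b, rfl⟩ := CStarAlgebra.nonneg_iff_eq_star_mul_self.mp hx
  obtain ⟨c, rfl⟩ := hπ b
  exact ⟨star c * c, star_mul_self_nonneg c, by rw [map_mul, map_star]⟩

theorem AMonotone.of_surjective {A B : Type} [CStarAlgebra A] [PartialOrder A]
    [StarOrderedRing A] [CStarAlgebra B] [PartialOrder B] [StarOrderedRing B]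
    (π : A →⋆ₐ[ℂ] B) (hπ : Function.Surjective π) {f : ℝ → ℝ}
    (hf : ContinuousOn f (Set.Ici 0)) (hA : AMonotone A f) : AMonotone B f := by
  rw [aMonotone_iff] at hA ⊢
  intro x y hx hxy
  obtain ⟨a, ha, rfl⟩ := π.exists_nonneg_preimage_of_surjective hπ hx
  obtain ⟨c, hc, hcxy⟩ := π.exists_nonneg_preimage_of_surjective hπ (sub_nonneg.mpr hxy)
  obtain rfl : π (a + c) = y := by rw [map_add, hcxy, add_sub_cancel]
  have hac : 0 ≤ a + c := add_nonneg ha hc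
  have hsa : IsSelfAdjoint a := .of_nonneg ha
  have hsac : IsSelfAdjoint (a + c) := .of_nonneg hac
  rw [← π.map_cfc f a (hf.mono (spectrum_nonneg_of_nonneg ha)) (ha := hsa) (hφa := hsa.map π),
    ← π.map_cfc f (a + c) (hf.mono (spectrum_nonneg_of_nonneg hac)) (ha := hsac)
      (hφa := hsac.map π)]
  exact OrderHomClass.mono π (hA a (a + c) ha (le_add_of_nonneg_right hc))

lemma cfc_eq_cfcₙ_sub_add {A : Type*} [CStarAlgebra A] [PartialOrder A] [StarOrderedRing A]
    {f : ℝ → ℝ} (hf : ContinuousOn f (Set.Ici 0)) {a : A} (ha : 0 ≤ a) :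
    cfc f a = cfcₙ (fun t ↦ f t - f 0) a + algebraMap ℝ A (f 0) := by
  have hq : quasispectrum ℝ a ⊆ Set.Ici 0 := quasispectrum_nonneg_of_nonneg a ha
  have hg : ContinuousOn (fun t ↦ f t - f 0) (quasispectrum ℝ a) :=
    (hf.mono hq).sub continuousOn_const
  rw [cfcₙ_eq_cfc hg (sub_self _), ← cfc_const (f 0) a,
    ← cfc_add a _ _ (hg.mono (spectrum_subset_quasispectrum ℝ a))]
  exact cfc_congr fun t _ ↦ by ring

theorem AMonotone.of_nonUnitalStarAlgHom {B C : Type} [CStarAlgebra B] [PartialOrder B]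
    [StarOrderedRing B] [CStarAlgebra C] [PartialOrder C] [StarOrderedRing C]
    (ι : B →⋆ₙₐ[ℂ] C) (hι : ∀ b, 0 ≤ ι b → 0 ≤ b) {f : ℝ → ℝ}
    (hf : ContinuousOn f (Set.Ici 0)) (hC : AMonotone C f) : AMonotone B f := by
  rw [aMonotone_iff] at hC ⊢
  intro x y hx hxy
  have hy := hx.trans hxy
  have hιx : 0 ≤ ι x := map_nonneg ι hx
  have hιy : 0 ≤ ι y := hιx.trans (OrderHomClass.mono ι hxy)
  have key := hC (ι x) (ι y) hιx (OrderHomClass.mono ι hxy)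
  have hg (a : B) (ha : 0 ≤ a) : ContinuousOn (fun t ↦ f t - f 0) (quasispectrum ℝ a) :=
    (hf.mono (quasispectrum_nonneg_of_nonneg a ha)).sub continuousOn_const
  rw [cfc_eq_cfcₙ_sub_add hf hιx, cfc_eq_cfcₙ_sub_add hf hιy, add_le_add_iff_right,
    ← ι.map_cfcₙ _ x (hg x hx), ← ι.map_cfcₙ _ y (hg y hy), ← sub_nonneg, ← map_sub] at key
  rw [cfc_eq_cfcₙ_sub_add hf hx, cfc_eq_cfcₙ_sub_add hf hy, add_le_add_iff_right, ← sub_nonneg]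
  exact hι _ key

section Compression

open ContinuousLinearMap InnerProduct

variable {E F : Type*} [NormedAddCommGroup E] [InnerProductSpace ℂ E] [CompleteSpace E]
  [NormedAddCommGroup F] [InnerProductSpace ℂ F] [CompleteSpace F]

def ContinuousLinearMap.isometryConj (J : E →L[ℂ] F) (hJ : J† ∘L J = 1) :
    (E →L[ℂ] E) →⋆ₙₐ[ℂ] (F →L[ℂ] F) where
  toFun S := J ∘L S ∘L J†
  map_smul' c S := by simp
  map_zero' := by simp
  map_add' S T := by simp [add_comp, comp_add]
  map_mul' S T := by
    simp only [mul_def, comp_assoc]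
    rw [← comp_assoc (J†) J, hJ, one_def, id_comp]
  map_star' S := by simp [star_eq_adjoint, adjoint_comp, comp_assoc]

lemma ContinuousLinearMap.isometryConj_nonneg_iff (J : E →L[ℂ] F) (hJ : J† ∘L J = 1)
    (S : E →L[ℂ] E) : 0 ≤ J.isometryConj hJ S ↔ 0 ≤ S := by
  change 0 ≤ J ∘L S ∘L J† ↔ 0 ≤ S
  refine ⟨fun h ↦ ?_, fun h ↦ ?_⟩
  · have hS : J† ∘L (J ∘L S ∘L J†) ∘L J = S := by
      simp only [← comp_assoc, hJ, one_def, id_comp]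
      rw [comp_assoc, hJ, one_def, comp_id]
    rw [nonneg_iff_isPositive] at h ⊢
    simpa only [hS] using h.adjoint_conj J
  · rw [nonneg_iff_isPositive] at h ⊢
    exact h.conj_adjoint J

end Compression

theorem AMonotone.of_linearIsometry {E F : Type} [NormedAddCommGroup E] [InnerProductSpace ℂ E]
    [CompleteSpace E] [NormedAddCommGroup F] [InnerProductSpace ℂ F] [CompleteSpace F]
    (J : E →ₗᵢ[ℂ] F) {f : ℝ → ℝ} (hf : ContinuousOn f (Set.Ici 0))
    (hF : AMonotone (F →L[ℂ] F) f) : AMonotone (E →L[ℂ] E) f :=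
  have hJ := (J.toContinuousLinearMap.norm_map_iff_adjoint_comp_self).mp J.norm_map
  hF.of_nonUnitalStarAlgHom (J.toContinuousLinearMap.isometryConj hJ)
    (fun S ↦ (J.toContinuousLinearMap.isometryConj_nonneg_iff hJ S).mp) hf

def EuclideanSpace.linearIsometryOfEmbedding {𝕜 ι κ : Type*} [RCLike 𝕜] [Fintype ι]
    [DecidableEq ι] [Fintype κ] [DecidableEq κ] (e : ι ↪ κ) :
    EuclideanSpace 𝕜 ι →ₗᵢ[𝕜] EuclideanSpace 𝕜 κ :=
  let b := EuclideanSpace.basisFun ι 𝕜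
  let w : ι → EuclideanSpace 𝕜 κ := fun i ↦ EuclideanSpace.single (e i) 1
  have hb : Orthonormal 𝕜 b.toBasis := by
    rw [b.coe_toBasis]
    exact b.orthonormal
  have hw : Orthonormal 𝕜 (b.toBasis.constr 𝕜 w ∘ b.toBasis) := by
    rw [show b.toBasis.constr 𝕜 w ∘ b.toBasis = w from funext (b.toBasis.constr_basis 𝕜 w)]
    exact EuclideanSpace.orthonormal_single.comp e e.injective
  (b.toBasis.constr 𝕜 w).isometryOfOrthonormal hb hw

theorem MatrixMonotone.of_le {n k : ℕ} (hnk : n ≤ k) {f : ℝ → ℝ}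
    (hf : ContinuousOn f (Set.Ici 0)) (hk : MatrixMonotone k f) : MatrixMonotone n f :=
  AMonotone.of_linearIsometry (EuclideanSpace.linearIsometryOfEmbedding (Fin.castLEEmb hnk)) hf hk

section Irreducible

variable {A H : Type} [CStarAlgebra A] [NormedAddCommGroup H] [InnerProductSpace ℂ H]
  [FiniteDimensional ℂ H] {π : A →⋆ₐ[ℂ] (H →L[ℂ] H)}

lemma IsIrreducibleRep.exists_eq_smul_of_commute (hπ : IsIrreducibleRep π) (g : H →ₗ[ℂ] H)
    (hg : ∀ a x, g (π a x) = π a (g x)) : ∃ μ : ℂ, ∀ x, g x = μ • x := by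
  cases subsingleton_or_nontrivial H
  · exact ⟨0, fun x ↦ Subsingleton.elim _ _⟩
  obtain ⟨μ, hμ⟩ := Module.End.exists_eigenvalue g
  have hinv (a : A) : ∀ x ∈ Module.End.eigenspace g μ, π a x ∈ Module.End.eigenspace g μ := by
    intro x hx
    rw [Module.End.mem_eigenspace_iff] at hx ⊢
    rw [hg, hx, map_smul]
  refine ⟨μ, fun x ↦ Module.End.mem_eigenspace_iff.mp ?_⟩
  rcases hπ _ (Submodule.closed_of_finiteDimensional _) hinv with h | h
  · exact absurd h (Module.End.hasEigenvalue_iff.mp hμ)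
  · exact h ▸ Submodule.mem_top

theorem IsIrreducibleRep.surjective (hπ : IsIrreducibleRep π) : Function.Surjective π := by
  classical
  let _ : Module A H := Module.compHom H (π : A →+* (H →L[ℂ] H))
  have smul_def (a : A) (x : H) : a • x = π a x := rfl
  have : IsScalarTower ℂ A H := ⟨fun c a x ↦ by simp [smul_def]⟩
  have : IsSemisimpleModule A H := by
    refine (isSemisimpleModule_iff _ _).mpr ⟨fun p ↦ ?_⟩
    rcases hπ (p.restrictScalars ℂ) (Submodule.closed_of_finiteDimensional _)
      (fun a x hx ↦ p.smul_mem a hx) with h | h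
    · obtain rfl := (Submodule.restrictScalars_eq_bot_iff ℂ A H).mp h
      exact ⟨⊤, isCompl_bot_top⟩
    · obtain rfl := (Submodule.restrictScalars_eq_top_iff ℂ A H).mp h
      exact ⟨⊥, isCompl_top_bot⟩
  intro T
  let T' : Module.End (Module.End A H) H :=
    { toFun := T
      map_add' := map_add T
      map_smul' := fun g x ↦ by
        obtain ⟨μ, hμ⟩ := hπ.exists_eq_smul_of_commute (g.restrictScalars ℂ)
          (fun a x ↦ g.map_smul a x)
        simp only [LinearMap.coe_restrictScalars] at hμ
        change T (g x) = g (T x)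
        rw [hμ, hμ, map_smul] }
  let b := Module.finBasis ℂ H
  obtain ⟨a, ha⟩ := jacobson_density T' (Finset.univ.image b)
  exact ⟨a, ContinuousLinearMap.coe_injective (b.ext fun i ↦ (ha (b i) (by simp)).symm)⟩

end Irreducible

/-- If the set of dimensions of finite-dimensional irreducible representations of `A`
is unbounded, then every `A`-monotone continuous function is matrix monotone of every
order (hence operator monotone): `P_A = P_∞`. -/
theorem stmt8 (A : Type) [CStarAlgebra A] [PartialOrder A] [StarOrderedRing A]
    (hub : ∀ m : ℕ, ∃ k : ℕ, m ≤ k ∧ ∃ π : A →⋆ₐ[ℂ] MatAlg k, IsIrreducibleRep π)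
    (f : ℝ → ℝ) (hf : ContinuousOn f (Set.Ici (0:ℝ))) (hA : AMonotone A f) :
    ∀ n : ℕ, MatrixMonotone n f := by
  intro n
  obtain ⟨k, hnk, π, hπ⟩ := hub n
  exact MatrixMonotone.of_le hnk hf (hA.of_surjective π hπ.surjective hf)
end
end
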